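/- Fix β > 0 and an integer j ≥ 1. There exist a constant C and continuous functions p_1, …, p_j : (0,2π) → ℝ with |p_ℓ(θ)| ≤ C · min(θ, 2π−θ)² for all θ ∈ (0,2π) (in particular each p_ℓ is bounded and vanishes to at least second order at θ = 0 and θ = 2π), such that for every j-times continuously differentiable function f : ℝ → ℂ and every θ ∈ (0,2π), f^{(j)}(T(θ)) = Σ_{ℓ=1}^{j} F^{(ℓ)}(θ) p_ℓ(θ), where F(θ) = f(T(θ)). -/

import Mathlib

/-!
Since `T' = 1 / s` with `s(θ) = 2 sin²(θ/2) / β`, differentiation in `x` becomes `s · d/dθ`, so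
`f^{(j)} ∘ T = (s · d/dθ)^j F`. Expanding this operator by the Leibniz rule gives
`∑ₗ pⱼₗ · d^ℓ/dθ^ℓ` with smooth coefficients obeying `pⱼ₊₁,ₗ = s · (pⱼ,ₗ₋₁ + pⱼₗ')`. For `j ≥ 1`
every coefficient is therefore `s` times a continuous function, and
`s(θ) ≤ min(θ, 2π - θ)² / (2β)`.
-/

/-- The change of variables `T(θ) = -β cot(θ/2)` mapping `(0, 2π)` onto `ℝ`. -/
noncomputable def Tmap (β : ℝ) (θ : ℝ) : ℝ :=
  -β * (Real.cos (θ / 2) / Real.sin (θ / 2))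

open Finset Set
open scoped ContDiff Topology

theorem ContDiffAt.hasDerivAt_iteratedDeriv {𝕜 F : Type*} [NontriviallyNormedField 𝕜]
    [NormedAddCommGroup F] [NormedSpace 𝕜 F] {f : 𝕜 → F} {x : 𝕜} {n : ℕ∞ω} {m : ℕ}
    (h : ContDiffAt 𝕜 n f x) (hmn : m < n) :
    HasDerivAt (iteratedDeriv m f) (iteratedDeriv (m + 1) f x) x := by
  rw [iteratedDeriv_succ, iteratedDeriv_eq_equiv_comp]
  exact ((LinearIsometryEquiv.comp_differentiableAt_iff _).mpr
    (h.differentiableAt_iteratedFDeriv hmn)).hasDerivAt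

theorem IsCompact.exists_pos_bound_of_continuous {ι X E : Type*} [TopologicalSpace X]
    [NormedAddCommGroup E] {K : Set X} (hK : IsCompact K) (S : Finset ι) {g : ι → X → E}
    (hg : ∀ i ∈ S, Continuous (g i)) : ∃ M, 0 < M ∧ ∀ i ∈ S, ∀ x ∈ K, ‖g i x‖ ≤ M := by
  obtain ⟨M, hM⟩ := hK.exists_bound_of_continuousOn
    (continuous_finsetSum S fun i hi => (hg i hi).norm).continuousOn
  refine ⟨max M 1, by positivity, fun i hi x hx => ?_⟩
  calc ‖g i x‖ ≤ ∑ i ∈ S, ‖g i x‖ := single_le_sum (fun i _ => norm_nonneg (g i x)) hi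
    _ ≤ ‖∑ i ∈ S, ‖g i x‖‖ := Real.le_norm_self _
    _ ≤ max M 1 := (hM x hx).trans (le_max_left _ _)

/-- `chainCoeff s j ℓ` is the coefficient of `d^ℓ/dx^ℓ` in the operator `(s · d/dx)^j`. -/
noncomputable def chainCoeff (s : ℝ → ℝ) : ℕ → ℕ → ℝ → ℝ
  | 0, ℓ => fun _ => if ℓ = 0 then 1 else 0
  | j + 1, 0 => s * deriv (chainCoeff s j 0)
  | j + 1, ℓ + 1 => s * (chainCoeff s j ℓ + deriv (chainCoeff s j (ℓ + 1)))

namespace chainCoeff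

variable (s : ℝ → ℝ)

theorem succ_zero (j : ℕ) : chainCoeff s (j + 1) 0 = 0 := by
  induction j with
  | zero => funext x; simp [chainCoeff]
  | succ j ih => rw [chainCoeff, ih, deriv_zero, mul_zero]

theorem eq_zero_of_lt {j ℓ : ℕ} (h : j < ℓ) : chainCoeff s j ℓ = 0 := by
  induction j generalizing ℓ with
  | zero => funext; simp [chainCoeff, h.ne']
  | succ j ih =>
    obtain ⟨ℓ, rfl⟩ := Nat.exists_eq_add_of_lt (Nat.zero_lt_of_lt h)
    rw [zero_add, chainCoeff, ih (by omega), ih (by omega), deriv_zero, add_zero, mul_zero]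

section Sums

variable {E : Type*} [NormedAddCommGroup E] [NormedSpace ℝ E]

theorem smul_sum_succ (j : ℕ) (x : ℝ) (a : ℕ → E) :
    s x • ∑ ℓ ∈ range (j + 1),
        (chainCoeff s j ℓ x • a (ℓ + 1) + deriv (chainCoeff s j ℓ) x • a ℓ) =
      ∑ ℓ ∈ range (j + 2), chainCoeff s (j + 1) ℓ x • a ℓ := by
  have hlast : deriv (chainCoeff s j (j + 1)) x = 0 := by
    rw [eq_zero_of_lt s (Nat.lt_succ_self j), deriv_zero, Pi.zero_apply]
  rw [sum_range_succ' _ (j + 1), sum_add_distrib, sum_range_succ' (fun ℓ => _ • a ℓ)]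
  simp only [chainCoeff, Pi.mul_apply, Pi.add_apply, mul_smul, add_smul, smul_add, smul_sum,
    sum_add_distrib, sum_range_succ _ j, hlast, zero_smul, smul_zero, add_zero]
  abel

theorem sum_range_eq_sum_Icc (j : ℕ) (x : ℝ) (a : ℕ → E) :
    ∑ ℓ ∈ range (j + 2), chainCoeff s (j + 1) ℓ x • a ℓ =
      ∑ ℓ ∈ Icc 1 (j + 1), chainCoeff s (j + 1) ℓ x • a ℓ := by
  rw [range_eq_Ico, sum_eq_sum_Ico_succ_bot (by omega), succ_zero, Pi.zero_apply, zero_smul,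
    zero_add, ← Finset.Ico_add_one_right_eq_Icc]
  rfl

end Sums

variable {s}

theorem contDiff (hs : ContDiff ℝ ∞ s) (j ℓ : ℕ) : ContDiff ℝ ∞ (chainCoeff s j ℓ) := by
  induction j generalizing ℓ with
  | zero => exact contDiff_const
  | succ j ih =>
    have hderiv : ∀ ℓ, ContDiff ℝ ∞ (deriv (chainCoeff s j ℓ)) :=
      fun ℓ => (contDiff_infty_iff_deriv.mp (ih ℓ)).2
    cases ℓ with
    | zero => exact hs.mul (hderiv 0)
    | succ ℓ => exact hs.mul ((ih ℓ).add (hderiv (ℓ + 1)))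

theorem exists_bound_succ (hs : ContDiff ℝ ∞ s) (j : ℕ) {K : Set ℝ} (hK : IsCompact K) :
    ∃ M, 0 < M ∧ ∀ ℓ, ∀ x ∈ K, |chainCoeff s (j + 1) ℓ x| ≤ M * |s x| := by
  have hfactor : ∀ ℓ, ∃ r : ℝ → ℝ, Continuous r ∧ chainCoeff s (j + 1) ℓ = s * r := by
    have hderiv : ∀ ℓ, Continuous (deriv (chainCoeff s j ℓ)) :=
      fun ℓ => (contDiff_infty_iff_deriv.mp (contDiff hs j ℓ)).2.continuous
    rintro (_ | ℓ)
    · exact ⟨_, hderiv 0, rfl⟩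
    · exact ⟨_, (contDiff hs j ℓ).continuous.add (hderiv (ℓ + 1)), rfl⟩
  choose r hr hcoeff using hfactor
  obtain ⟨M, hM, hbound⟩ :=
    hK.exists_pos_bound_of_continuous (range (j + 2)) fun ℓ _ => hr ℓ
  refine ⟨M, hM, fun ℓ x hx => ?_⟩
  by_cases hℓ : ℓ ∈ range (j + 2)
  · rw [hcoeff, Pi.mul_apply, abs_mul, mul_comm]
    exact mul_le_mul_of_nonneg_right (hbound ℓ hℓ x hx) (abs_nonneg _)
  · rw [eq_zero_of_lt s (by simp only [Finset.mem_range, not_lt] at hℓ; omega), Pi.zero_apply,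
      abs_zero]
    positivity

end chainCoeff

theorem iteratedDeriv_comp_eq_sum_chainCoeff {E : Type*} [NormedAddCommGroup E]
    [NormedSpace ℝ E] {T s : ℝ → ℝ} {U : Set ℝ} (hU : IsOpen U) (hs : ContDiff ℝ ∞ s)
    (hT : ContDiffOn ℝ ∞ T U) (hs₀ : ∀ x ∈ U, s x ≠ 0)
    (hT' : ∀ x ∈ U, HasDerivAt T (s x)⁻¹ x) (j : ℕ) {f : ℝ → E} (hf : ContDiff ℝ j f)
    {x : ℝ} (hx : x ∈ U) :
    iteratedDeriv j f (T x) =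
      ∑ ℓ ∈ range (j + 1), chainCoeff s j ℓ x • iteratedDeriv ℓ (f ∘ T) x := by
  induction j generalizing x with
  | zero => simp [chainCoeff]
  | succ j ih =>
    set rhs : ℝ → E := fun y => ∑ ℓ ∈ range (j + 1), chainCoeff s j ℓ y • iteratedDeriv ℓ (f ∘ T) y
    have hF : ContDiffAt ℝ (j + 1 : ℕ) (f ∘ T) x :=
      (hf.comp_contDiffOn (hT.of_le (by exact_mod_cast le_top))).contDiffAt (hU.mem_nhds hx)
    have hlhs : HasDerivAt (fun y => iteratedDeriv j f (T y))
        ((s x)⁻¹ • iteratedDeriv (j + 1) f (T x)) x :=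
      (hf.contDiffAt.hasDerivAt_iteratedDeriv (by exact_mod_cast j.lt_succ_self)).scomp x
        (hT' x hx)
    have hrhs : HasDerivAt rhs (∑ ℓ ∈ range (j + 1),
        (chainCoeff s j ℓ x • iteratedDeriv (ℓ + 1) (f ∘ T) x +
          deriv (chainCoeff s j ℓ) x • iteratedDeriv ℓ (f ∘ T) x)) x := by
      refine HasDerivAt.fun_sum fun ℓ hℓ => ?_
      have hℓj : (ℓ : ℕ∞ω) < (j + 1 : ℕ) := by exact_mod_cast Finset.mem_range.mp hℓ
      exact ((chainCoeff.contDiff hs j ℓ).differentiable (by simp)).differentiableAt.hasDerivAt.smul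
        (hF.hasDerivAt_iteratedDeriv hℓj)
    have heq : (fun y => iteratedDeriv j f (T y)) =ᶠ[𝓝 x] rhs := by
      filter_upwards [hU.mem_nhds hx] with y hy
      exact ih (hf.of_le (by exact_mod_cast j.le_succ)) hy
    rw [← chainCoeff.smul_sum_succ, ← (hlhs.congr_of_eventuallyEq heq.symm).unique hrhs,
      smul_inv_smul₀ (hs₀ x hx)]

namespace Tmap

open Real

noncomputable def invDeriv (β θ : ℝ) : ℝ := 2 * sin (θ / 2) ^ 2 / β

theorem contDiff_invDeriv (β : ℝ) : ContDiff ℝ ∞ (invDeriv β) := by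
  unfold invDeriv; fun_prop

theorem sin_half_pos {θ : ℝ} (hθ : θ ∈ Ioo 0 (2 * π)) : 0 < sin (θ / 2) :=
  sin_pos_of_pos_of_lt_pi (by linarith [hθ.1]) (by linarith [hθ.2])

theorem invDeriv_pos {β θ : ℝ} (hβ : 0 < β) (hθ : θ ∈ Ioo 0 (2 * π)) : 0 < invDeriv β θ := by
  have := sin_half_pos hθ
  unfold invDeriv; positivity

theorem hasDerivAt {β θ : ℝ} (hβ : β ≠ 0) (hθ : sin (θ / 2) ≠ 0) :
    HasDerivAt (Tmap β) (invDeriv β θ)⁻¹ θ := by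
  have hhalf : HasDerivAt (fun t : ℝ => t / 2) (1 / 2) θ := (hasDerivAt_id θ).div_const 2
  have hcot := (((hasDerivAt_cos _).comp θ hhalf).div
    ((hasDerivAt_sin _).comp θ hhalf) hθ).const_mul (-β)
  refine hcot.congr_deriv ?_
  simp only [Function.comp_apply, invDeriv, inv_div]
  field_simp
  linear_combination sin_sq_add_cos_sq (θ / 2)

theorem contDiffOn (β : ℝ) : ContDiffOn ℝ ∞ (Tmap β) (Ioo 0 (2 * π)) := by
  have hcos : ContDiff ℝ ∞ fun θ => cos (θ / 2) := by fun_prop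
  have hsin : ContDiff ℝ ∞ fun θ => sin (θ / 2) := by fun_prop
  exact contDiffOn_const.mul
    (hcos.contDiffOn.div hsin.contDiffOn fun θ hθ => (sin_half_pos hθ).ne')

theorem two_mul_sin_half_le_min {θ : ℝ} (hθ : θ ∈ Icc 0 (2 * π)) :
    2 * sin (θ / 2) ≤ min θ (2 * π - θ) := by
  have hleft := sin_le (by linarith [hθ.1] : 0 ≤ θ / 2)
  have hright := sin_le (by linarith [hθ.2] : 0 ≤ π - θ / 2)
  rw [sin_pi_sub] at hright
  exact le_min (by linarith) (by linarith)

theorem abs_invDeriv_le {β θ : ℝ} (hβ : 0 < β) (hθ : θ ∈ Icc 0 (2 * π)) :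
    |invDeriv β θ| ≤ min θ (2 * π - θ) ^ 2 / (2 * β) := by
  have hsin : 0 ≤ sin (θ / 2) :=
    sin_nonneg_of_nonneg_of_le_pi (by linarith [hθ.1]) (by linarith [hθ.2])
  have hsq : (2 * sin (θ / 2)) ^ 2 ≤ min θ (2 * π - θ) ^ 2 :=
    pow_le_pow_left₀ (by positivity) (two_mul_sin_half_le_min hθ) 2
  rw [invDeriv, abs_of_nonneg (by positivity), div_le_div_iff₀ hβ (by positivity)]
  nlinarith

end Tmap

/-- **Chain-rule structure of derivatives under the map `T`.** Fix `β > 0` and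
an integer `j ≥ 1`. There exist a constant `C` and continuous functions
`p_1, …, p_j : (0,2π) → ℝ` with `|p_ℓ(θ)| ≤ C · min(θ, 2π−θ)²` on `(0,2π)`
(so each `p_ℓ` is bounded and vanishes to second order at `0` and `2π`), such
that for every `C^j` function `f : ℝ → ℂ` and every `θ ∈ (0,2π)`,
`f^{(j)}(T(θ)) = ∑_{ℓ=1}^j F^{(ℓ)}(θ) p_ℓ(θ)` where `F(θ) = f(T(θ))`. -/
theorem deriv_through_Tmap (β : ℝ) (hβ : 0 < β) (j : ℕ) (hj : 1 ≤ j) :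
    ∃ C : ℝ, 0 < C ∧ ∃ p : ℕ → ℝ → ℝ,
      (∀ ℓ ∈ Finset.Icc 1 j, ContinuousOn (p ℓ) (Set.Ioo 0 (2 * Real.pi))) ∧
      (∀ ℓ ∈ Finset.Icc 1 j, ∀ θ ∈ Set.Ioo (0 : ℝ) (2 * Real.pi),
        |p ℓ θ| ≤ C * (min θ (2 * Real.pi - θ)) ^ 2) ∧
      ∀ f : ℝ → ℂ, ContDiff ℝ j f → ∀ θ ∈ Set.Ioo (0 : ℝ) (2 * Real.pi),
        iteratedDeriv j f (Tmap β θ) =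
          ∑ ℓ ∈ Finset.Icc 1 j,
            iteratedDeriv ℓ (fun θ' => f (Tmap β θ')) θ * ((p ℓ θ : ℝ) : ℂ) := by
  obtain ⟨k, rfl⟩ := Nat.exists_eq_add_of_le' hj
  have hs := Tmap.contDiff_invDeriv β
  obtain ⟨M, hM, hbound⟩ :=
    chainCoeff.exists_bound_succ hs k (isCompact_Icc (a := 0) (b := 2 * Real.pi))
  refine ⟨M / (2 * β), by positivity, chainCoeff (Tmap.invDeriv β) (k + 1),
    fun ℓ _ => (chainCoeff.contDiff hs _ ℓ).continuous.continuousOn, fun ℓ _ θ hθ => ?_,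
    fun f hf θ hθ => ?_⟩
  · calc |chainCoeff (Tmap.invDeriv β) (k + 1) ℓ θ| ≤ M * |Tmap.invDeriv β θ| :=
          hbound ℓ θ (Ioo_subset_Icc_self hθ)
      _ ≤ M * (min θ (2 * Real.pi - θ) ^ 2 / (2 * β)) := by
          gcongr; exact Tmap.abs_invDeriv_le hβ (Ioo_subset_Icc_self hθ)
      _ = M / (2 * β) * min θ (2 * Real.pi - θ) ^ 2 := by ring
  · rw [iteratedDeriv_comp_eq_sum_chainCoeff isOpen_Ioo hs (Tmap.contDiffOn β)
      (fun θ hθ => (Tmap.invDeriv_pos hβ hθ).ne')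
      (fun θ hθ => Tmap.hasDerivAt hβ.ne' (Tmap.sin_half_pos hθ).ne') (k + 1) hf hθ,
      chainCoeff.sum_range_eq_sum_Icc]
    simp only [Complex.real_smul, mul_comm, Function.comp_def]
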